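/- Let X ⊆ ℙ(ℂ^{d+1}) be a σ-invariant subset, let V ⊆ ℂ^{d+1} be a real ℂ-subspace of dimension ℓ := d−k ≥ 1 with ℙ(V) ∩ X = ∅, and fix an integer m with 1 ≤ m ≤ ℓ. For a real subspace V_0 ⊆ V with dim V_0 = ℓ−m, let π_{V_0} denote the projection from ℙ(V_0): π_{V_0}([x̂]) = [P_{V_0^⊥}(x̂)] ∈ ℙ(V_0^⊥) for x̂ ∉ V_0. Then X is hyperbolic with respect to V if and only if for every real subspace V_0 ⊆ V with dim V_0 = ℓ−m, the projected set π_{V_0}(X) ⊆ ℙ(V_0^⊥) is hyperbolic (within the ambient space V_0^⊥) with respect to the m-dimensional real subspace V ∩ V_0^⊥ of V_0^⊥. (Proposition 3.3.) -/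

import Mathlib

/-!
Points of `ℙ(ℂ^{d+1})` are modelled by their nonzero representative vectors, and subsets of
`ℙ(ℂ^{d+1})` by their cones: sets of nonzero vectors stable under multiplication by nonzero
scalars. `σ` is coordinatewise complex conjugation; a point `[x]` is real iff `σ(x)` is a
scalar multiple of `x`, and a `ℂ`-subspace `W` is real iff `σ(W) = W` (equivalently, `σ`
maps `W` into `W`, `σ` being an involution). `ℂ^{d+1}` carries the standard Hermitian inner
product (`EuclideanSpace`).
-/

noncomputable section

/-- `ℂ^{d+1}` with the standard Hermitian inner product. -/
abbrev EE (d : ℕ) : Type := EuclideanSpace ℂ (Fin (d + 1))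

/-- Coordinatewise complex conjugation `σ`. -/
def conjE {d : ℕ} (x : EE d) : EE d := WithLp.toLp 2 (fun i => (starRingEnd ℂ) (x i))

/-- `x` represents a real point of projective space: `σ(x)` is proportional to `x`. -/
def IsRealPt {d : ℕ} (x : EE d) : Prop := ∃ c : ℂ, conjE x = c • x

/-- A real (σ-invariant) `ℂ`-subspace. -/
def IsRealSub {d : ℕ} (V : Submodule ℂ (EE d)) : Prop := ∀ x ∈ V, conjE x ∈ V

/-- `X` is the cone over a subset of projective space: `0 ∉ X` and `X` is stable under
multiplication by nonzero scalars. -/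
def IsProjCone {d : ℕ} (X : Set (EE d)) : Prop :=
  (0 : EE d) ∉ X ∧ ∀ x ∈ X, ∀ c : ℂ, c ≠ 0 → c • x ∈ X

/-- `X` is σ-invariant. -/
def IsSigmaInv {d : ℕ} (X : Set (EE d)) : Prop := ∀ x ∈ X, conjE x ∈ X

/-- The projection from `ℙ(V₀)`: orthogonal projection onto `V₀ᗮ` (on cones). -/
def projPerp {d : ℕ} (V₀ : Submodule ℂ (EE d)) (x : EE d) : EE d :=
  (V₀ᗮ.orthogonalProjectionOnto x : EE d)

/-- `X` (a cone over a subset of `ℙ(W)`) is hyperbolic, within the ambient subspace `W`,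
with respect to the real subspace `V ≤ W`: `ℙ(V) ∩ X = ∅` and for every real subspace
`U` with `V ≤ U ≤ W` and `dim U = dim V + 1`, every point of `X ∩ ℙ(U)` is real. -/
def HyperbolicIn {d : ℕ} (W : Submodule ℂ (EE d)) (X : Set (EE d))
    (V : Submodule ℂ (EE d)) : Prop :=
  (∀ x ∈ X, x ∉ V) ∧
    ∀ U : Submodule ℂ (EE d), U ≤ W → V ≤ U →
      Module.finrank ℂ U = Module.finrank ℂ V + 1 →
      IsRealSub U → ∀ x ∈ X, x ∈ U → IsRealPt x

/-- Hyperbolicity in the full ambient space `ℙ(ℂ^{d+1})`. -/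
def Hyperbolic {d : ℕ} (X : Set (EE d)) (V : Submodule ℂ (EE d)) : Prop :=
  HyperbolicIn ⊤ X V

/-!
Projecting from a real `V₀ ≤ V` commutes with `σ`, and a real `U ≤ V₀ᗮ` containing `V ⊓ V₀ᗮ`
with one more dimension lifts to the real `V₀ ⊔ U ⊇ V` of dimension `dim V + 1`; hence
hyperbolicity descends to projections. Conversely, let `x ∈ X` lie in a real
`U ⊇ V` with `dim U = dim V + 1`. Since `x ∉ V`, `S = span {x, σ x}` (of dimension `≤ 2`) meets
`V` in dimension at most `1`, so a real `V₀ ≤ V` of codimension `m ≥ 1` can be chosen with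
`V₀ ∩ S = 0`. The projection of `x` from `V₀` is real, i.e. `σ x - c x ∈ V₀` for some `c`;
as `σ x - c x ∈ S`, it vanishes and `x` is real.
-/

section

open Module

variable {d : ℕ}

@[simp] lemma conjE_add (x y : EE d) : conjE (x + y) = conjE x + conjE y := by
  ext i; simp [conjE]

@[simp] lemma conjE_sub (x y : EE d) : conjE (x - y) = conjE x - conjE y := by
  ext i; simp [conjE]

@[simp] lemma conjE_smul (c : ℂ) (x : EE d) : conjE (c • x) = starRingEnd ℂ c • conjE x := by
  ext i; simp [conjE]

@[simp] lemma conjE_conjE (x : EE d) : conjE (conjE x) = x := by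
  ext i; simp [conjE]

lemma inner_conjE_conjE (x y : EE d) :
    inner ℂ (conjE x) (conjE y) = starRingEnd ℂ (inner ℂ x y) := by
  simp [conjE, PiLp.inner_apply, map_sum, mul_comm]

namespace IsRealSub

variable {V W : Submodule ℂ (EE d)}

lemma orthogonal (hV : IsRealSub V) : IsRealSub Vᗮ := by
  intro x hx v hv
  rw [← conjE_conjE v, inner_conjE_conjE, hx _ (hV v hv), map_zero]

lemma inf (hV : IsRealSub V) (hW : IsRealSub W) : IsRealSub (V ⊓ W) :=
  fun x hx => ⟨hV x hx.1, hW x hx.2⟩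

lemma sup (hV : IsRealSub V) (hW : IsRealSub W) : IsRealSub (V ⊔ W) := by
  intro x hx
  obtain ⟨y, hy, z, hz, rfl⟩ := Submodule.mem_sup.1 hx
  rw [conjE_add]
  exact Submodule.add_mem_sup (hV y hy) (hW z hz)

end IsRealSub

lemma isRealSub_bot : IsRealSub (⊥ : Submodule ℂ (EE d)) := by
  intro x hx
  rw [Submodule.mem_bot] at hx ⊢
  subst hx
  ext i
  simp [conjE]

lemma isRealSub_span_singleton {v : EE d} (hv : conjE v = v) :
    IsRealSub (Submodule.span ℂ {v}) := by
  intro x hx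
  obtain ⟨c, rfl⟩ := Submodule.mem_span_singleton.1 hx
  rw [conjE_smul, hv]
  exact Submodule.smul_mem _ _ (Submodule.mem_span_singleton_self v)

/-- `x + σ x` and `i (x - σ x)` are real and span `x`, so one of them escapes `W`. -/
lemma IsRealSub.exists_conjE_eq_self_mem_notMem {V W : Submodule ℂ (EE d)} (hV : IsRealSub V)
    (hVW : ¬ V ≤ W) : ∃ v ∈ V, v ∉ W ∧ conjE v = v := by
  obtain ⟨x, hxV, hxW⟩ := SetLike.not_le_iff_exists.1 hVW
  by_cases hre : x + conjE x ∈ W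
  · refine ⟨Complex.I • (x - conjE x), V.smul_mem _ (V.sub_mem hxV (hV x hxV)), ?_, ?_⟩
    · rw [W.smul_mem_iff Complex.I_ne_zero]
      intro him
      have h2x : (2 : ℂ) • x ∈ W := by
        rw [show (2 : ℂ) • x = (x + conjE x) + (x - conjE x) by rw [two_smul]; abel]
        exact W.add_mem hre him
      exact hxW ((W.smul_mem_iff two_ne_zero).1 h2x)
    · simp only [conjE_smul, conjE_sub, conjE_conjE, Complex.conj_I]
      rw [neg_smul, ← smul_neg, neg_sub]
  · exact ⟨x + conjE x, V.add_mem hxV (hV x hxV), hre, by rw [conjE_add, conjE_conjE, add_comm]⟩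

lemma IsRealSub.exists_disjoint {V T : Submodule ℂ (EE d)} (hV : IsRealSub V) (hTV : T ≤ V) :
    ∀ r, finrank ℂ T + r ≤ finrank ℂ V →
      ∃ V₀ ≤ V, IsRealSub V₀ ∧ finrank ℂ V₀ = r ∧ Disjoint V₀ T
  | 0, _ => ⟨⊥, bot_le, isRealSub_bot, finrank_bot ℂ _, disjoint_bot_left⟩
  | r + 1, hr => by
    obtain ⟨V₀, hV₀V, hV₀, hV₀r, hV₀T⟩ := hV.exists_disjoint hTV r (by omega)
    have hTV₀ : ¬ V ≤ T ⊔ V₀ := fun hle => by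
      have := Submodule.finrank_mono hle
      have := Submodule.finrank_sup_add_finrank_inf_eq T V₀
      rw [hV₀T.symm.eq_bot, finrank_bot] at this
      omega
    obtain ⟨v, hvV, hvTV₀, hv⟩ := hV.exists_conjE_eq_self_mem_notMem hTV₀
    refine ⟨V₀ ⊔ Submodule.span ℂ {v},
      sup_le hV₀V ((Submodule.span_singleton_le_iff_mem _ _).2 hvV),
      hV₀.sup (isRealSub_span_singleton hv), ?_, ?_⟩
    · rw [Submodule.finrank_sup_span_singleton fun h => hvTV₀ (Submodule.mem_sup_right h), hV₀r]
    · exact (hV₀T.symm.disjoint_sup_right_of_disjoint_sup_left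
        (Submodule.disjoint_span_singleton_of_notMem hvTV₀)).symm

lemma finrank_orthogonal_inf_succ {V₀ V U : Submodule ℂ (EE d)} (hV₀V : V₀ ≤ V) (hVU : V ≤ U)
    (hU : finrank ℂ U = finrank ℂ V + 1) :
    finrank ℂ ↥(U ⊓ V₀ᗮ) = finrank ℂ ↥(V ⊓ V₀ᗮ) + 1 := by
  have hV := Submodule.finrank_add_inf_finrank_orthogonal hV₀V
  have hU' := Submodule.finrank_add_inf_finrank_orthogonal (hV₀V.trans hVU)
  rw [inf_comm] at hV hU'
  omega

lemma finrank_sup_of_le_orthogonal {V₀ U : Submodule ℂ (EE d)} (hU : U ≤ V₀ᗮ) :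
    finrank ℂ ↥(V₀ ⊔ U) = finrank ℂ V₀ + finrank ℂ U := by
  have := Submodule.finrank_sup_add_finrank_inf_eq V₀ U
  rwa [(V₀.orthogonal_disjoint.mono_right hU).eq_bot, finrank_bot, add_zero] at this

section projPerp

variable {V₀ W : Submodule ℂ (EE d)}

lemma projPerp_mem_orthogonal (x : EE d) : projPerp V₀ x ∈ V₀ᗮ :=
  (V₀ᗮ.orthogonalProjectionOnto x).2

lemma sub_projPerp_mem (x : EE d) : x - projPerp V₀ x ∈ V₀ := by
  have h := V₀ᗮ.sub_starProjection_mem_orthogonal x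
  rwa [Submodule.orthogonal_orthogonal] at h

lemma projPerp_mem_iff (hV₀W : V₀ ≤ W) {x : EE d} : projPerp V₀ x ∈ W ↔ x ∈ W := by
  have h := W.sub_mem_iff_left (x := x) (hV₀W (sub_projPerp_mem x))
  rwa [sub_sub_cancel] at h

lemma mem_sup_of_projPerp_mem {x : EE d} (hx : projPerp V₀ x ∈ W) : x ∈ V₀ ⊔ W :=
  (projPerp_mem_iff le_sup_left).1 (Submodule.mem_sup_right hx)

@[simp] lemma projPerp_sub (x y : EE d) : projPerp V₀ (x - y) = projPerp V₀ x - projPerp V₀ y := by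
  simp [projPerp]

@[simp] lemma projPerp_smul (c : ℂ) (x : EE d) : projPerp V₀ (c • x) = c • projPerp V₀ x := by
  simp [projPerp]

lemma conjE_projPerp (hV₀ : IsRealSub V₀) (x : EE d) :
    conjE (projPerp V₀ x) = projPerp V₀ (conjE x) := by
  refine (V₀ᗮ.eq_starProjection_of_mem_orthogonal (hV₀.orthogonal _ (projPerp_mem_orthogonal x))
    ?_).symm
  rw [Submodule.orthogonal_orthogonal, ← conjE_sub]
  exact hV₀ _ (sub_projPerp_mem x)

lemma IsRealPt.of_projPerp (hV₀ : IsRealSub V₀) {x : EE d} (hx : IsRealPt (projPerp V₀ x))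
    (hdisj : Disjoint V₀ (Submodule.span ℂ {x, conjE x})) : IsRealPt x := by
  obtain ⟨c, hc⟩ := hx
  have hV₀ : conjE x - c • x ∈ V₀ := by
    rw [← projPerp_mem_iff le_rfl, projPerp_sub, projPerp_smul, ← conjE_projPerp hV₀, hc, sub_self]
    exact V₀.zero_mem
  have hS : conjE x - c • x ∈ Submodule.span ℂ {x, conjE x} :=
    Submodule.sub_mem _ (Submodule.subset_span (by simp))
      (Submodule.smul_mem _ _ (Submodule.subset_span (by simp)))
  exact ⟨c, sub_eq_zero.1 ((Submodule.disjoint_def.1 hdisj) _ hV₀ hS)⟩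

end projPerp

section Hyperbolic

variable {X : Set (EE d)} {V : Submodule ℂ (EE d)}

lemma Hyperbolic.hyperbolicIn_projPerp {V₀ : Submodule ℂ (EE d)} (hX : Hyperbolic X V)
    (hV₀V : V₀ ≤ V) (hV₀ : IsRealSub V₀) : HyperbolicIn V₀ᗮ (projPerp V₀ '' X) (V ⊓ V₀ᗮ) := by
  refine ⟨?_, ?_⟩
  · rintro _ ⟨x, hx, rfl⟩ hπx
    exact hX.1 x hx ((projPerp_mem_iff hV₀V).1 hπx.1)
  · rintro U hU hVU hUdim hUreal _ ⟨x, hx, rfl⟩ hπx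
    have hVU₀ : V ≤ V₀ ⊔ U := fun v hv =>
      mem_sup_of_projPerp_mem (hVU ⟨(projPerp_mem_iff hV₀V).2 hv, projPerp_mem_orthogonal v⟩)
    have hdim : finrank ℂ ↥(V₀ ⊔ U) = finrank ℂ V + 1 := by
      rw [finrank_sup_of_le_orthogonal hU, hUdim, ← add_assoc, inf_comm,
        Submodule.finrank_add_inf_finrank_orthogonal hV₀V]
    obtain ⟨c, hc⟩ := hX.2 (V₀ ⊔ U) le_top hVU₀ hdim (hV₀.sup hUreal) x hx
      (mem_sup_of_projPerp_mem hπx)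
    exact ⟨c, by rw [conjE_projPerp hV₀, hc, projPerp_smul]⟩

lemma Hyperbolic.of_hyperbolicIn_projPerp {m : ℕ} (hm : 1 ≤ m) (hV : IsRealSub V)
    (hXV : ∀ x ∈ X, x ∉ V)
    (h : ∀ V₀ ≤ V, IsRealSub V₀ → finrank ℂ V₀ = finrank ℂ V - m →
      HyperbolicIn V₀ᗮ (projPerp V₀ '' X) (V ⊓ V₀ᗮ)) :
    Hyperbolic X V := by
  classical
  refine ⟨hXV, fun U _ hVU hUdim hU x hx hxU => ?_⟩
  set S := Submodule.span ℂ {x, conjE x}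
  have hSV : finrank ℂ ↥(V ⊓ S) ≤ 1 := by
    have hlt : V ⊓ S < S := SetLike.lt_iff_le_and_exists.2
      ⟨inf_le_right, x, Submodule.subset_span (by simp), fun hxV => hXV x hx hxV.1⟩
    have hS : finrank ℂ S ≤ 2 :=
      (finrank_span_le_card ({x, conjE x} : Set (EE d))).trans (by simpa using Finset.card_le_two)
    have := Submodule.finrank_lt_finrank_of_lt hlt
    omega
  have hSV' : finrank ℂ ↥(V ⊓ S) ≤ finrank ℂ V := Submodule.finrank_mono inf_le_left
  obtain ⟨V₀, hV₀V, hV₀, hV₀dim, hV₀S⟩ :=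
    hV.exists_disjoint (T := V ⊓ S) inf_le_left (finrank ℂ V - m) (by omega)
  have hπx : IsRealPt (projPerp V₀ x) :=
    (h V₀ hV₀V hV₀ hV₀dim).2 (U ⊓ V₀ᗮ) inf_le_right (inf_le_inf_right _ hVU)
      (finrank_orthogonal_inf_succ hV₀V hVU hUdim) (hU.inf hV₀.orthogonal) _ ⟨x, hx, rfl⟩
      ⟨(projPerp_mem_iff (hV₀V.trans hVU)).2 hxU, projPerp_mem_orthogonal x⟩
  refine hπx.of_projPerp hV₀ (disjoint_iff.2 ?_)
  rw [← inf_eq_left.2 hV₀V, inf_assoc]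
  exact hV₀S.eq_bot

end Hyperbolic

end

theorem stmt9_general (d ℓ m : ℕ) (hm1 : 1 ≤ m)
    (X : Set (EE d))
    (V : Submodule ℂ (EE d)) (hVreal : IsRealSub V)
    (hVdim : Module.finrank ℂ V = ℓ)
    (hdisj : ∀ x ∈ X, x ∉ V) :
    Hyperbolic X V ↔
      ∀ V₀ : Submodule ℂ (EE d), V₀ ≤ V → IsRealSub V₀ →
        Module.finrank ℂ V₀ = ℓ - m →
        HyperbolicIn V₀ᗮ (projPerp V₀ '' X) (V ⊓ V₀ᗮ) := by
  subst hVdim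
  exact ⟨fun hX V₀ hV₀V hV₀ _ => hX.hyperbolicIn_projPerp hV₀V hV₀,
    Hyperbolic.of_hyperbolicIn_projPerp hm1 hVreal hdisj⟩

theorem stmt9 (d ℓ m : ℕ) (hℓ1 : 1 ≤ ℓ) (hℓ2 : ℓ ≤ d) (hm1 : 1 ≤ m) (hm2 : m ≤ ℓ)
    (X : Set (EE d)) (hXcone : IsProjCone X) (hXσ : IsSigmaInv X)
    (V : Submodule ℂ (EE d)) (hVreal : IsRealSub V)
    (hVdim : Module.finrank ℂ V = ℓ)
    (hdisj : ∀ x ∈ X, x ∉ V) :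
    Hyperbolic X V ↔
      ∀ V₀ : Submodule ℂ (EE d), V₀ ≤ V → IsRealSub V₀ →
        Module.finrank ℂ V₀ = ℓ - m →
        HyperbolicIn V₀ᗮ (projPerp V₀ '' X) (V ⊓ V₀ᗮ) :=
  stmt9_general d ℓ m hm1 X V hVreal hVdim hdisj

end
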